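/- Let T be the 2k-regular tree (Cayley graph of the free group on k generators with symmetric generating set S of size 2k), let μ_X be the standard random walk, and let G be a finite connected graph with all degrees in [3,d], N vertices, and girth g. For q < g/2, every path p⃗ of length q in G starting at p₀ reduces (by cancelling backtracks) to a unique simple path p⃗' joining its endpoints, and the expected induced walk satisfies: the expectation over uniformly random symmetric S^j-labelings α of the measure μ^q_{G,α}(x→·) (defined by μ^q_{G,α}(x→x') = ∑_{|p⃗|=q} ν_G(p₀)μ_G^q(p⃗)·1(xα(p⃗)=x')) equals the convex combination ∑_{l=0}^{q} P_G^q(l)·μ_X^{jl}(x→·), where P_G^q(l) is the probability that q steps of the stationary walk on G end at graph distance exactly l from the start. -/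

import Mathlib

open Finset

/-- The element of the free group on `k` generators spelled by a word of length `j` in the
generators and their inverses. -/
def wordOf {k j : ℕ} (w : Fin j → Fin k × Bool) : FreeGroup (Fin k) :=
  ((List.ofFn w).map fun s => if s.2 then FreeGroup.of s.1 else (FreeGroup.of s.1)⁻¹).prod

open Classical in
/-- The `m`-step transition probability of the standard random walk on the Cayley graph of
the free group on `k` generators (the `2k`-regular tree). -/
noncomputable def treeWalk (k m : ℕ) (x x' : FreeGroup (Fin k)) : ℝ :=
  ((Finset.univ.filter fun w : Fin m → Fin k × Bool => x * wordOf w = x').card : ℝ) /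
    (2 * k) ^ m

/-- The symmetric `S^j`-labeling determined by the i.i.d. choices `β` on oriented edges
`(u,v)` with `u < v`; the opposite orientation gets the inverse word. -/
def lab {V : Type*} [LinearOrder V] {k j : ℕ} (β : V → V → Fin j → Fin k × Bool)
    (u v : V) : FreeGroup (Fin k) :=
  if u < v then wordOf (β u v) else (wordOf (β v u))⁻¹

/-- The product of the labels read along a path `p` of length `q`. -/
def pathWord {V : Type*} [LinearOrder V] {k j q : ℕ} (β : V → V → Fin j → Fin k × Bool)
    (p : Fin (q + 1) → V) : FreeGroup (Fin k) :=
  ((List.ofFn fun i : Fin q => lab β (p i.castSucc) (p i.succ))).prod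

/-- The stationary measure `ν_G(u) = deg(u)/(2|E|)` of the simple random walk. -/
noncomputable def nuG {V : Type*} [Fintype V] (G : SimpleGraph V) [DecidableRel G.Adj]
    (u : V) : ℝ :=
  (G.degree u : ℝ) / ∑ v, (G.degree v : ℝ)

/-- The probability that the simple random walk follows the given vertex sequence. -/
noncomputable def pathProb {V : Type*} [Fintype V] (G : SimpleGraph V) [DecidableRel G.Adj]
    {q : ℕ} (p : Fin (q + 1) → V) : ℝ :=
  ∏ i : Fin q, if G.Adj (p i.castSucc) (p i.succ) then (G.degree (p i.castSucc) : ℝ)⁻¹ else 0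

open Classical in
/-- The induced random walk `μ^q_{G,α}(x → x')` on the tree, for the labeling given by `β`. -/
noncomputable def indWalk {V : Type*} [Fintype V] [LinearOrder V] (G : SimpleGraph V)
    [DecidableRel G.Adj] (k j q : ℕ) (β : V → V → Fin j → Fin k × Bool)
    (x x' : FreeGroup (Fin k)) : ℝ :=
  ∑ p : Fin (q + 1) → V,
    nuG G (p 0) * pathProb G p * (if x * pathWord β p = x' then 1 else 0)

open Classical in
/-- `P_G^q(l)`: the probability that `q` steps of the stationary simple random walk on `G`
end at graph distance exactly `l` from the starting point. -/
noncomputable def travelProb {V : Type*} [Fintype V] (G : SimpleGraph V)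
    [DecidableRel G.Adj] (q l : ℕ) : ℝ :=
  ∑ p : Fin (q + 1) → V,
    nuG G (p 0) * pathProb G p * (if G.dist (p 0) (p (Fin.last q)) = l then 1 else 0)


/-! Since `2q` is below the girth, a walk of length at most `q` collapses, once its backtracks are
cancelled, to the unique shortest path between its endpoints, and the labels of the cancelled
edges cancel in the free group. A shortest path of length `l` crosses `l` distinct edges, whose
labels are independent uniform words of length `j` (an edge traversed against its orientation
reads the inverse word, and inversion is a bijection of `S^j`). So for every fixed walk the
induced word is a uniform word of length `j l`, i.e. distributed as `μ_X^{jl}`; averaging over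
walks weighted by the stationary walk on `G` gives the convex combination. -/

section Words

variable {k j : ℕ}

lemma List.ofFn_comp_rev {α : Type*} {n : ℕ} (f : Fin n → α) :
    List.ofFn (f ∘ Fin.rev) = (List.ofFn f).reverse := by
  refine List.ext_getElem (by simp) fun i _ _ => ?_
  simp only [List.getElem_ofFn, Function.comp_apply, List.getElem_reverse, List.length_ofFn]
  congr 1
  ext
  simp only [Fin.val_rev]
  omega

def wordInv : Equiv.Perm (Fin j → Fin k × Bool) :=
  Function.Involutive.toPerm (fun w i => ((w i.rev).1, !(w i.rev).2)) fun w => by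
    funext i; simp

lemma wordOf_wordInv (w : Fin j → Fin k × Bool) : wordOf (wordInv w) = (wordOf w)⁻¹ := by
  have hflip : ∀ s : Fin k × Bool,
      (if (!s.2) = true then FreeGroup.of s.1 else (FreeGroup.of s.1)⁻¹) =
        (if s.2 then FreeGroup.of s.1 else (FreeGroup.of s.1)⁻¹)⁻¹ := by
    rintro ⟨a, _ | _⟩ <;> simp
  have : List.ofFn (wordInv w) = ((List.ofFn w).map fun s => (s.1, !s.2)).reverse := by
    rw [← List.map_reverse, ← List.ofFn_comp_rev, List.map_ofFn]
    rfl
  rw [wordOf, wordOf, this, List.prod_inv_reverse, List.map_reverse, List.map_map, List.map_map]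
  simp only [Function.comp_def, hflip]

def splitBlocks (α : Type*) (j l : ℕ) : (Fin (j * l) → α) ≃ (Fin l → Fin j → α) :=
  (Equiv.arrowCongr ((finCongr (Nat.mul_comm j l)).trans finProdFinEquiv.symm)
    (Equiv.refl α)).trans (Equiv.curry _ _ _)

lemma splitBlocks_apply {α : Type*} {l : ℕ} (w : Fin (j * l) → α) (i : Fin l) (t : Fin j) :
    splitBlocks α j l w i t = w ⟨j * i + t, by nlinarith [i.isLt, t.isLt]⟩ := by
  simp [splitBlocks, finProdFinEquiv, Nat.add_comm]

lemma wordOf_eq_prod_splitBlocks {l : ℕ} (w : Fin (j * l) → Fin k × Bool) :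
    wordOf w = (List.ofFn fun i => wordOf (splitBlocks _ j l w i)).prod := by
  rw [wordOf, List.ofFn_mul' w, List.map_flatten, List.prod_flatten, List.map_ofFn]
  simp only [Function.comp_def, List.map_ofFn, wordOf, splitBlocks_apply]

lemma card_filter_prod_wordOf (l : ℕ) (x x' : FreeGroup (Fin k)) :
    #{f : Fin l → Fin j → Fin k × Bool | x * (List.ofFn fun i => wordOf (f i)).prod = x'} =
      #{w : Fin (j * l) → Fin k × Bool | x * wordOf w = x'} :=
  (card_equiv (splitBlocks _ j l) fun w => by simp [wordOf_eq_prod_splitBlocks w]).symm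

end Words

lemma card_fun_mul_card_filter_comp_injective {ι α W : Type*} [Fintype ι] [Fintype α]
    [Fintype W] [DecidableEq ι] [DecidableEq α] {e : ι → α} (he : Function.Injective e)
    (P : (ι → W) → Prop) [DecidablePred P] :
    Fintype.card (ι → W) * #{β : α → W | P (β ∘ e)} =
      Fintype.card (α → W) * #{f : ι → W | P f} := by
  let E : (α → W) ≃ (ι → W) × ({a // a ∉ Set.range e} → W) :=
    (Equiv.piEquivPiSubtypeProd (· ∈ Set.range e) fun _ => W).trans
      ((Equiv.arrowCongr (Equiv.ofInjective e he).symm (Equiv.refl W)).prodCongr (Equiv.refl _))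
  have hE : ∀ β, (E β).1 = β ∘ e := fun β => rfl
  have hcard : #{β : α → W | P (β ∘ e)} =
      #{f : ι → W | P f} * Fintype.card ({a // a ∉ Set.range e} → W) := by
    rw [← Finset.card_univ, ← Finset.card_product]
    exact card_equiv E fun β => by simp [hE]
  rw [hcard, Fintype.card_congr E, Fintype.card_prod]
  ring

namespace SimpleGraph.Walk

variable {V : Type*} {G : SimpleGraph V}

lemma IsPath.eq_of_length_add_lt_egirth {u v : V} {p₁ p₂ : G.Walk u v} (hp₁ : p₁.IsPath)
    (hp₂ : p₂.IsPath) (hlt : ((p₁.length + p₂.length : ℕ) : ℕ∞) < G.egirth) : p₁ = p₂ := by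
  by_contra hne
  obtain ⟨_, _, _, c, hc, hlen⟩ := hp₁.exists_isCycle_length_le_add_of_ne hp₂ hne
  exact (egirth_le_length hc).not_gt (lt_of_le_of_lt (by exact_mod_cast hlen) hlt)

def ofFn : ∀ {n : ℕ} (p : Fin (n + 1) → V), (∀ i : Fin n, G.Adj (p i.castSucc) (p i.succ)) →
    G.Walk (p 0) (p (Fin.last n))
  | 0, _, _ => nil
  | n + 1, p, hadj =>
    (cons (hadj 0) (ofFn (fun i => p i.succ) fun i => Fin.succ_castSucc i ▸ hadj i.succ)).copy
      (congrArg p Fin.castSucc_zero) (congrArg p (Fin.succ_last n))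

@[simp] lemma length_ofFn {n : ℕ} (p : Fin (n + 1) → V)
    (hadj : ∀ i : Fin n, G.Adj (p i.castSucc) (p i.succ)) : (ofFn p hadj).length = n := by
  induction n with
  | zero => rfl
  | succ n ih => rw [ofFn, length_copy, length_cons, ih]

variable [DecidableEq V]

def consReduce {u a v : V} (h : G.Adj u a) : G.Walk a v → G.Walk u v
  | nil => cons h nil
  | @cons _ _ _ b _ h' p => if hb : b = u then p.copy hb rfl else cons h (cons h' p)

def reduce : ∀ {u v : V}, G.Walk u v → G.Walk u v
  | _, _, nil => nil
  | _, _, cons h p => consReduce h p.reduce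

lemma length_consReduce_le {u a v : V} (h : G.Adj u a) (r : G.Walk a v) :
    (consReduce h r).length ≤ r.length + 1 := by
  cases r with
  | nil => simp [consReduce]
  | cons h' p =>
    rw [consReduce]
    split <;> simp; omega

lemma length_reduce_le {u v : V} (w : G.Walk u v) : w.reduce.length ≤ w.length := by
  induction w with
  | nil => simp [reduce]
  | cons h p ih =>
    have := length_consReduce_le h p.reduce
    rw [reduce, length_cons]
    omega

lemma IsPath.consReduce {u a v : V} (h : G.Adj u a) {r : G.Walk a v} (hr : r.IsPath)
    (hlt : ((r.length + 1 : ℕ) : ℕ∞) < G.egirth) : (consReduce h r).IsPath := by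
  cases r with
  | nil => exact IsPath.nil.cons (by simpa using h.ne)
  | @cons _ b _ h' p =>
    rw [Walk.consReduce]
    split_ifs with hb
    · subst hb
      simpa using hr.of_cons
    · refine hr.cons fun hu => ?_
      have hu' : u ∈ p.support := by
        simpa [h.ne] using hu
      -- `a → b ⇝ u` and the edge `a → u` would be two distinct paths from `a` to `u`
      obtain ⟨hp, ha⟩ := (cons_isPath_iff _ _).mp hr
      have hlong : (cons h' (p.takeUntil u hu')).IsPath :=
        (hp.takeUntil hu').cons fun ha' => ha (p.support_takeUntil_subset_support hu' ha')
      have hedge : (cons h.symm Walk.nil : G.Walk a u).IsPath :=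
        IsPath.nil.cons (by simpa using h.ne')
      have heq := hlong.eq_of_length_add_lt_egirth hedge
        (lt_of_le_of_lt (by have := p.length_takeUntil_le_length hu'; simp; omega) hlt)
      have hzero : (p.takeUntil u hu').length = 0 := by simpa using congrArg length heq
      exact hb (eq_of_length_eq_zero hzero)

lemma isPath_reduce {u v : V} (w : G.Walk u v) (hlt : (w.length : ℕ∞) < G.egirth) :
    w.reduce.IsPath := by
  induction w with
  | nil => exact IsPath.nil
  | cons h p ih =>
    have hp := length_reduce_le p
    simp only [length_cons, Nat.cast_add, Nat.cast_one] at hlt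
    refine (ih (lt_of_le_of_lt (by simp) hlt)).consReduce h (lt_of_le_of_lt ?_ hlt)
    exact_mod_cast Nat.succ_le_succ hp

lemma length_reduce_eq_dist {u v : V} (w : G.Walk u v)
    (hlt : ((2 * w.length : ℕ) : ℕ∞) < G.egirth) : w.reduce.length = G.dist u v := by
  obtain ⟨s, hs, hslen⟩ := w.reachable.exists_path_of_dist
  have hbound : w.reduce.length + s.length ≤ 2 * w.length := by
    have := length_reduce_le w
    have := G.dist_le w
    omega
  rw [(isPath_reduce w (lt_of_le_of_lt (by norm_cast; omega) hlt)).eq_of_length_add_lt_egirth hs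
    (lt_of_le_of_lt (by exact_mod_cast hbound) hlt), hslen]

end SimpleGraph.Walk

section Labels

variable {V : Type*} [LinearOrder V] {k j : ℕ}

lemma lab_mul_lab (β : V → V → Fin j → Fin k × Bool) {u v : V} (huv : u ≠ v) :
    lab β u v * lab β v u = 1 := by
  rcases huv.lt_or_gt with h | h
  · rw [lab, lab, if_pos h, if_neg h.not_gt, mul_inv_cancel]
  · rw [lab, lab, if_neg h.not_gt, if_pos h, inv_mul_cancel]

lemma lab_eq_wordOf (β : V → V → Fin j → Fin k × Bool) (u v : V) :
    lab β u v = wordOf ((if u < v then 1 else wordInv) (β s(u, v).inf s(u, v).sup)) := by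
  by_cases h : u < v
  · simp [lab, h, h.le]
  · simp [lab, h, not_lt.mp h, wordOf_wordInv]

end Labels

namespace SimpleGraph.Walk

variable {V : Type*} [LinearOrder V] {G : SimpleGraph V} {k j : ℕ}

def word (β : V → V → Fin j → Fin k × Bool) {u v : V} (w : G.Walk u v) : FreeGroup (Fin k) :=
  (w.darts.map fun d => lab β d.fst d.snd).prod

variable (β : V → V → Fin j → Fin k × Bool)

@[simp] lemma word_cons {u a v : V} (h : G.Adj u a) (p : G.Walk a v) :
    (cons h p).word β = lab β u a * p.word β := by
  simp [word]

@[simp] lemma word_copy {u v u' v' : V} (p : G.Walk u v) (hu : u = u') (hv : v = v') :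
    (p.copy hu hv).word β = p.word β := by
  subst hu hv; rfl

lemma word_consReduce {u a v : V} (h : G.Adj u a) (r : G.Walk a v) :
    (consReduce h r).word β = lab β u a * r.word β := by
  cases r with
  | nil => simp [consReduce]
  | cons h' p =>
    rw [consReduce]
    split_ifs with hb
    · subst hb
      rw [word_copy, word_cons, ← mul_assoc, lab_mul_lab β h.ne, one_mul]
    · exact word_cons β h _

lemma word_reduce {u v : V} (w : G.Walk u v) : w.reduce.word β = w.word β := by
  induction w with
  | nil => rfl
  | cons h p ih => rw [reduce, word_consReduce, ih, word_cons]

lemma word_ofFn {n : ℕ} (p : Fin (n + 1) → V)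
    (hadj : ∀ i : Fin n, G.Adj (p i.castSucc) (p i.succ)) :
    (ofFn p hadj).word β = pathWord β p := by
  induction n with
  | zero => rfl
  | succ n ih =>
    rw [ofFn, word_copy, word_cons, ih, pathWord, pathWord, List.ofFn_succ, List.prod_cons]
    rfl

lemma card_filter_word_of_isPath [Fintype V] {u v : V} {r : G.Walk u v} (hr : r.IsPath)
    (x x' : FreeGroup (Fin k)) :
    (2 * k) ^ (j * r.length) * #{β : V → V → Fin j → Fin k × Bool | x * r.word β = x'} =
      Fintype.card (V → V → Fin j → Fin k × Bool) *
        #{w : Fin (j * r.length) → Fin k × Bool | x * wordOf w = x'} := by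
  classical
  rw [← r.length_darts]
  set l := r.darts.length
  let ends : Fin l → V × V := fun i => (r.darts[i].edge.inf, r.darts[i].edge.sup)
  let σ : Fin l → Equiv.Perm (Fin j → Fin k × Bool) :=
    fun i => if r.darts[i].fst < r.darts[i].snd then 1 else wordInv
  have hword : ∀ β, r.word β =
      (List.ofFn fun i => wordOf (σ i (Function.uncurry β (ends i)))).prod := by
    intro β
    rw [word, ← List.ofFn_getElem_eq_map]
    simp only [lab_eq_wordOf]
    rfl
  have hinj : Function.Injective ends := by
    intro i i' h
    have hnodup : (r.darts.map Dart.edge).Nodup := hr.edges_nodup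
    have hedge : (r.darts.map Dart.edge)[i]'(by rw [List.length_map]; exact i.isLt) =
        (r.darts.map Dart.edge)[i']'(by rw [List.length_map]; exact i'.isLt) := by
      simpa using Sym2.inf_eq_inf_and_sup_eq_sup.mp (Prod.ext_iff.mp h)
    exact Fin.ext (hnodup.getElem_inj_iff.mp hedge)
  let P : (Fin l → Fin j → Fin k × Bool) → Prop :=
    fun f => x * (List.ofFn fun i => wordOf (σ i (f i))).prod = x'
  calc (2 * k) ^ (j * l) * #{β : V → V → Fin j → Fin k × Bool | x * r.word β = x'}
      = Fintype.card (Fin l → Fin j → Fin k × Bool) *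
          #{β : V × V → Fin j → Fin k × Bool | P (β ∘ ends)} := by
        congr 1
        · simp only [Fintype.card_fun, Fintype.card_prod, Fintype.card_fin, Fintype.card_bool]
          ring
        · exact card_equiv (Equiv.curry V V _).symm fun β => by simp [hword, P]
    _ = Fintype.card (V × V → Fin j → Fin k × Bool) * #{f | P f} :=
        card_fun_mul_card_filter_comp_injective hinj P
    _ = Fintype.card (V → V → Fin j → Fin k × Bool) *
          #{f : Fin l → Fin j → Fin k × Bool |
            x * (List.ofFn fun i => wordOf (f i)).prod = x'} := by
        congr 1
        · exact Fintype.card_congr (Equiv.curry V V _)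
        · exact card_equiv (Equiv.piCongrRight σ) fun f => by simp [P]
    _ = _ := by rw [card_filter_prod_wordOf]

end SimpleGraph.Walk

section InducedWalk

open SimpleGraph

variable {V : Type*} [Fintype V] {G : SimpleGraph V} {k j q : ℕ}

lemma adj_of_pathProb_ne_zero [DecidableRel G.Adj] {p : Fin (q + 1) → V}
    (hp : pathProb G p ≠ 0) (i : Fin q) : G.Adj (p i.castSucc) (p i.succ) := by
  by_contra hi
  exact hp (Finset.prod_eq_zero (Finset.mem_univ i) (if_neg hi))

lemma sum_range_travelProb_mul [DecidableRel G.Adj] (c : ℕ → ℝ) :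
    ∑ l ∈ range (q + 1), travelProb G q l * c l =
      ∑ p : Fin (q + 1) → V, nuG G (p 0) * pathProb G p * c (G.dist (p 0) (p (Fin.last q))) := by
  simp only [travelProb, Finset.sum_mul]
  rw [Finset.sum_comm]
  refine Finset.sum_congr rfl fun p _ => ?_
  by_cases hp : pathProb G p = 0
  · simp [hp]
  have hdist : G.dist (p 0) (p (Fin.last q)) < q + 1 := by
    have := G.dist_le (Walk.ofFn p (adj_of_pathProb_ne_zero hp))
    rw [Walk.length_ofFn] at this
    omega
  simp [hdist]

lemma sum_indicator_pathWord [LinearOrder V] (hk : k ≠ 0) (hq : ((2 * q : ℕ) : ℕ∞) < G.egirth)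
    {p : Fin (q + 1) → V} (hadj : ∀ i : Fin q, G.Adj (p i.castSucc) (p i.succ))
    (x x' : FreeGroup (Fin k)) :
    ∑ β : V → V → Fin j → Fin k × Bool, (if x * pathWord β p = x' then (1 : ℝ) else 0) =
      Fintype.card (V → V → Fin j → Fin k × Bool) *
        treeWalk k (j * G.dist (p 0) (p (Fin.last q))) x x' := by
  set w := Walk.ofFn p hadj
  have hw : ((2 * w.length : ℕ) : ℕ∞) < G.egirth := by simpa [w] using hq
  have hpath : w.reduce.IsPath := w.isPath_reduce (lt_of_le_of_lt (by norm_cast; omega) hw)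
  have hcount := Walk.card_filter_word_of_isPath (j := j) hpath x x'
  simp only [Walk.word_reduce, w, Walk.word_ofFn] at hcount
  rw [Finset.sum_boole, treeWalk, ← w.length_reduce_eq_dist hw]
  have hpos : (0 : ℝ) < (2 * k) ^ (j * w.reduce.length) := by positivity
  rw [mul_div_assoc', eq_div_iff hpos.ne', mul_comm]
  exact_mod_cast hcount

end InducedWalk

theorem stmt16_general {V : Type*} [Fintype V] [LinearOrder V] (G : SimpleGraph V)
    [DecidableRel G.Adj] (k j q : ℕ)
    (hk : 1 ≤ k)
    (hgirth : (2 * q : ℕ∞) < G.girth) (x x' : FreeGroup (Fin k)) :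
    (∀ (u v : V) (w₁ w₂ : G.Walk u v), w₁.IsPath → w₂.IsPath →
      w₁.length ≤ q → w₂.length ≤ q → w₁ = w₂) ∧
    (∑ β : V → V → Fin j → Fin k × Bool, indWalk G k j q β x x') /
        (Fintype.card (V → V → Fin j → Fin k × Bool) : ℝ) =
      ∑ l ∈ Finset.range (q + 1), travelProb G q l * treeWalk k (j * l) x x' := by
  have hq : ((2 * q : ℕ) : ℕ∞) < G.egirth := by
    exact_mod_cast hgirth.trans_le G.egirth.natCast_toNat_le_self
  refine ⟨fun u v w₁ w₂ h₁ h₂ l₁ l₂ =>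
    h₁.eq_of_length_add_lt_egirth h₂ (lt_of_le_of_lt (by norm_cast; omega) hq), ?_⟩
  have : Nonempty (Fin k) := ⟨⟨0, hk⟩⟩
  have hcard : (0 : ℝ) < Fintype.card (V → V → Fin j → Fin k × Bool) := by
    exact_mod_cast Fintype.card_pos
  rw [div_eq_iff hcard.ne', sum_range_travelProb_mul, Finset.sum_mul]
  simp only [indWalk]
  rw [Finset.sum_comm]
  refine Finset.sum_congr rfl fun p _ => ?_
  by_cases hp : pathProb G p = 0
  · simp [hp]
  rw [← Finset.mul_sum, sum_indicator_pathWord (by omega) hq (adj_of_pathProb_ne_zero hp)]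
  ring

/-- For `q < girth/2`: (i) any two paths of length `≤ q` with the same endpoints coincide
(unique reduction to a simple path), and (ii) the expectation over uniformly random symmetric
`S^j`-labelings of the induced walk `μ^q_{G,α}(x→x')` equals the convex combination
`∑_{l=0}^{q} P_G^q(l)·μ_X^{jl}(x→x')` of tree walks. -/
theorem stmt16 {V : Type*} [Fintype V] [LinearOrder V] (G : SimpleGraph V)
    [DecidableRel G.Adj] (hconn : G.Connected) (d k j q : ℕ)
    (hdeg : ∀ v, 3 ≤ G.degree v ∧ G.degree v ≤ d) (hk : 1 ≤ k) (hj : 1 ≤ j)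
    (hgirth : (2 * q : ℕ∞) < G.girth) (x x' : FreeGroup (Fin k)) :
    (∀ (u v : V) (w₁ w₂ : G.Walk u v), w₁.IsPath → w₂.IsPath →
      w₁.length ≤ q → w₂.length ≤ q → w₁ = w₂) ∧
    (∑ β : V → V → Fin j → Fin k × Bool, indWalk G k j q β x x') /
        (Fintype.card (V → V → Fin j → Fin k × Bool) : ℝ) =
      ∑ l ∈ Finset.range (q + 1), travelProb G q l * treeWalk k (j * l) x x' :=
  stmt16_general G k j q hk hgirth x x'
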